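/- In any finite-horizon minimax control system, the optimal worst-case cost equals the dynamic-programming value at the initial information state: min over all strategies g of J(g) = V_0(X₀). -/
import Mathlib


/-- A finite-horizon minimax control system. -/
structure Sys where
  T : ℕ
  X : ℕ → Type
  U : ℕ → Type
  W : ℕ → Type
  Z : ℕ → Type
  f : ∀ t, X t → U t → W t → X (t+1)
  h : ∀ t, X t → U t → Z (t+1)
  X0 : Set (X 0)
  d : X T → ℝ

namespace Sys

variable (S : Sys)

/-- A strategy assigns to each time `t` and history `(z_{1:t}, u_{0:t-1})` an action. -/
def Strat := ∀ t : ℕ, (∀ ℓ : Fin t, S.Z (ℓ.1+1)) → (∀ ℓ : Fin t, S.U ℓ.1) → S.U t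

/-- Closed-loop trajectory: state, observation history and action history. -/
def traj (g : S.Strat) (x0 : S.X 0) (w : ∀ t, S.W t) :
    ∀ t : ℕ, S.X t × (∀ ℓ : Fin t, S.Z (ℓ.1+1)) × (∀ ℓ : Fin t, S.U ℓ.1)
  | 0 => (x0, fun i => i.elim0, fun i => i.elim0)
  | t+1 =>
    let p := traj g x0 w t
    let u := g t p.2.1 p.2.2
    (S.f t p.1 u (w t),
     Fin.snoc (α := fun ℓ : Fin (t+1) => S.Z (ℓ.1+1)) p.2.1 (S.h t p.1 u),
     Fin.snoc (α := fun ℓ : Fin (t+1) => S.U ℓ.1) p.2.2 u)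

/-- Worst-case cost of a strategy. -/
noncomputable def J (g : S.Strat) : ℝ :=
  sSup {r | ∃ x0 ∈ S.X0, ∃ w : ∀ t, S.W t, r = S.d (S.traj g x0 w S.T).1}

/-- Open-loop trajectory for a prefix of action values. -/
def olp (x0 : S.X 0) (w : ∀ t, S.W t) : ∀ t : ℕ, (∀ ℓ : Fin t, S.U ℓ.1) → S.X t
  | 0, _ => x0
  | t+1, u => S.f t (olp x0 w t (fun ℓ => u ℓ.castSucc)) (u (Fin.last t)) (w t)

/-- The information state `P_t(z_{1:t}, u_{0:t-1})`. -/
def infoState (t : ℕ) (z : ∀ ℓ : Fin t, S.Z (ℓ.1+1)) (u : ∀ ℓ : Fin t, S.U ℓ.1) :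
    Set (S.X t) :=
  {x | ∃ x0 ∈ S.X0, ∃ w : ∀ s, S.W s,
    (∀ ℓ : Fin t, S.h ℓ.1 (S.olp x0 w ℓ.1 (fun j => u ⟨j.1, j.2.trans ℓ.2⟩)) (u ℓ) = z ℓ) ∧
    S.olp x0 w t u = x}

/-- The strategy-independent information-state update map `f̃_t`. -/
def Ftil (t : ℕ) (P : Set (S.X t)) (u : S.U t) (z : S.Z (t+1)) : Set (S.X (t+1)) :=
  {x' | ∃ x ∈ P, S.h t x u = z ∧ ∃ w : S.W t, x' = S.f t x u w}

/-- The feasible-observation set `Z̃_t(P, u)`. -/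
def Zfeas (t : ℕ) (P : Set (S.X t)) (u : S.U t) : Set (S.Z (t+1)) :=
  {z | ∃ x ∈ P, S.h t x u = z}

/-- The dynamic-programming value functions. -/
noncomputable def V (t : ℕ) (P : Set (S.X t)) : ℝ :=
  if h : t = S.T then sSup {r | ∃ x ∈ P, r = S.d (h ▸ x)}
  else if h2 : t < S.T then
    sInf {r | ∃ u : S.U t,
      r = sSup {s | ∃ z ∈ S.Zfeas t P u, s = V (t+1) (S.Ftil t P u z)}}
  else 0
termination_by S.T - t
decreasing_by omega

end Sys

namespace Sys

section Aux
variable (S : Sys)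

/-! ### snoc helpers -/

lemma snocZ (t : ℕ) (z : ∀ ℓ : Fin t, S.Z (ℓ.1+1)) (ζ : S.Z (t+1)) (j : ℕ)
    (h : j < t) (h' : j < t+1) :
    Fin.snoc (α := fun ℓ : Fin (t+1) => S.Z (ℓ.1+1)) z ζ ⟨j,h'⟩ = z ⟨j,h⟩ :=
  Fin.snoc_castSucc (α := fun ℓ : Fin (t+1) => S.Z (ℓ.1+1)) (p := z) (x := ζ) (i := ⟨j,h⟩)

lemma snocU (t : ℕ) (u : ∀ ℓ : Fin t, S.U ℓ.1) (a : S.U t) (j : ℕ)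
    (h : j < t) (h' : j < t+1) :
    Fin.snoc (α := fun ℓ : Fin (t+1) => S.U ℓ.1) u a ⟨j,h'⟩ = u ⟨j,h⟩ :=
  Fin.snoc_castSucc (α := fun ℓ : Fin (t+1) => S.U ℓ.1) (p := u) (x := a) (i := ⟨j,h⟩)

lemma snocZlast (t : ℕ) (z : ∀ ℓ : Fin t, S.Z (ℓ.1+1)) (ζ : S.Z (t+1)) (h' : t < t+1) :
    Fin.snoc (α := fun ℓ : Fin (t+1) => S.Z (ℓ.1+1)) z ζ ⟨t,h'⟩ = ζ :=
  Fin.snoc_last (α := fun ℓ : Fin (t+1) => S.Z (ℓ.1+1)) (p := z) (x := ζ)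

lemma snocUlast (t : ℕ) (u : ∀ ℓ : Fin t, S.U ℓ.1) (a : S.U t) (h' : t < t+1) :
    Fin.snoc (α := fun ℓ : Fin (t+1) => S.U ℓ.1) u a ⟨t,h'⟩ = a :=
  Fin.snoc_last (α := fun ℓ : Fin (t+1) => S.U ℓ.1) (p := u) (x := a)

/-! ### olp helpers -/

lemma olp_congr (x0 : S.X 0) (w : ∀ s, S.W s) (t : ℕ) {u v : ∀ ℓ : Fin t, S.U ℓ.1}
    (h : ∀ ℓ, u ℓ = v ℓ) : S.olp x0 w t u = S.olp x0 w t v := by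
  have : u = v := funext h
  rw [this]

lemma olp_succ (x0 : S.X 0) (w : ∀ s, S.W s) (t : ℕ) (u : ∀ ℓ : Fin (t+1), S.U ℓ.1) :
    S.olp x0 w (t+1) u
      = S.f t (S.olp x0 w t (fun ℓ => u ℓ.castSucc)) (u (Fin.last t)) (w t) := rfl

lemma olp_snoc (x0 : S.X 0) (w : ∀ s, S.W s) (t : ℕ) (u : ∀ ℓ : Fin t, S.U ℓ.1) (a : S.U t) :
    S.olp x0 w (t+1) (Fin.snoc (α := fun ℓ : Fin (t+1) => S.U ℓ.1) u a)
      = S.f t (S.olp x0 w t u) a (w t) := by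
  rw [olp_succ]
  congr 1
  · exact S.olp_congr x0 w t (fun ℓ => Fin.snoc_castSucc (α := fun ℓ : Fin (t+1) => S.U ℓ.1) (p := u) (x := a) (i := ℓ))
  · exact Fin.snoc_last (α := fun ℓ : Fin (t+1) => S.U ℓ.1) (p := u) (x := a)

lemma olp_congr_w (x0 : S.X 0) {t : ℕ} {w w' : ∀ s, S.W s} (hw : ∀ s, s < t → w s = w' s)
    (u : ∀ ℓ : Fin t, S.U ℓ.1) : S.olp x0 w t u = S.olp x0 w' t u := by
  induction t with
  | zero => rfl
  | succ t ih =>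
    rw [olp_succ, olp_succ, ih (fun s hs => hw s (by omega)) (fun ℓ => u ℓ.castSucc),
      hw t (by omega)]

/-! ### consistency predicates -/

def gcons (g : S.Strat) (t : ℕ) (z : ∀ ℓ : Fin t, S.Z (ℓ.1+1)) (u : ∀ ℓ : Fin t, S.U ℓ.1) : Prop :=
  ∀ ℓ : Fin t, u ℓ = g ℓ.1 (fun j => z ⟨j.1, j.2.trans ℓ.2⟩) (fun j => u ⟨j.1, j.2.trans ℓ.2⟩)

def ocons (x0 : S.X 0) (w : ∀ s, S.W s) (t : ℕ) (z : ∀ ℓ : Fin t, S.Z (ℓ.1+1))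
    (u : ∀ ℓ : Fin t, S.U ℓ.1) : Prop :=
  ∀ ℓ : Fin t, S.h ℓ.1 (S.olp x0 w ℓ.1 (fun j => u ⟨j.1, j.2.trans ℓ.2⟩)) (u ℓ) = z ℓ

lemma mem_infoState_iff {t : ℕ} {z : ∀ ℓ : Fin t, S.Z (ℓ.1+1)} {u : ∀ ℓ : Fin t, S.U ℓ.1}
    {x : S.X t} :
    x ∈ S.infoState t z u ↔ ∃ x0 ∈ S.X0, ∃ w : ∀ s, S.W s,
      S.ocons x0 w t z u ∧ S.olp x0 w t u = x := Iff.rfl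

lemma gcons_snoc (g : S.Strat) (t : ℕ) (z : ∀ ℓ : Fin t, S.Z (ℓ.1+1))
    (u : ∀ ℓ : Fin t, S.U ℓ.1) (a : S.U t) (ζ : S.Z (t+1)) :
    S.gcons g (t+1) (Fin.snoc (α := fun ℓ : Fin (t+1) => S.Z (ℓ.1+1)) z ζ)
      (Fin.snoc (α := fun ℓ : Fin (t+1) => S.U ℓ.1) u a)
      ↔ (S.gcons g t z u ∧ a = g t z u) := by
  constructor
  · intro H
    constructor
    · intro ℓ
      exact ((S.snocU t u a ℓ.1 ℓ.2 (by omega)).symm.trans (H ⟨ℓ.1, by omega⟩)).trans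
        (congrArg₂ (g ℓ.1)
          (funext fun j => S.snocZ t z ζ j.1 (j.2.trans ℓ.2) (by omega))
          (funext fun j => S.snocU t u a j.1 (j.2.trans ℓ.2) (by omega)))
    · exact ((S.snocUlast t u a (by omega)).symm.trans (H ⟨t, by omega⟩)).trans
        (congrArg₂ (g t)
          (funext fun j => S.snocZ t z ζ j.1 j.2 (by omega))
          (funext fun j => S.snocU t u a j.1 j.2 (by omega)))
  · rintro ⟨H, ha⟩ ⟨l, hl⟩
    by_cases h : l < t
    · exact (S.snocU t u a l h hl).trans ((H ⟨l, h⟩).trans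
        (congrArg₂ (g l)
          (funext fun j => (S.snocZ t z ζ j.1 (j.2.trans h) (by omega)).symm)
          (funext fun j => (S.snocU t u a j.1 (j.2.trans h) (by omega)).symm)))
    · have hlt : l = t := by omega
      subst hlt
      exact (S.snocUlast l u a hl).trans (ha.trans
        (congrArg₂ (g l)
          (funext fun j => (S.snocZ l z ζ j.1 j.2 (by omega)).symm)
          (funext fun j => (S.snocU l u a j.1 j.2 (by omega)).symm)))

lemma ocons_snoc (x0 : S.X 0) (w : ∀ s, S.W s) (t : ℕ) (z : ∀ ℓ : Fin t, S.Z (ℓ.1+1))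
    (u : ∀ ℓ : Fin t, S.U ℓ.1) (a : S.U t) (ζ : S.Z (t+1)) :
    S.ocons x0 w (t+1) (Fin.snoc (α := fun ℓ : Fin (t+1) => S.Z (ℓ.1+1)) z ζ)
      (Fin.snoc (α := fun ℓ : Fin (t+1) => S.U ℓ.1) u a)
      ↔ (S.ocons x0 w t z u ∧ S.h t (S.olp x0 w t u) a = ζ) := by
  constructor
  · intro H
    constructor
    · intro ℓ
      exact (congrArg₂ (S.h ℓ.1)
          (S.olp_congr x0 w ℓ.1 (fun j => (S.snocU t u a j.1 (j.2.trans ℓ.2) (by omega)).symm))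
          (S.snocU t u a ℓ.1 ℓ.2 (by omega)).symm).trans
        ((H ⟨ℓ.1, by omega⟩).trans (S.snocZ t z ζ ℓ.1 ℓ.2 (by omega)))
    · exact (congrArg₂ (S.h t)
          (S.olp_congr x0 w t (fun j => (S.snocU t u a j.1 j.2 (by omega)).symm))
          (S.snocUlast t u a (by omega)).symm).trans
        ((H ⟨t, by omega⟩).trans (S.snocZlast t z ζ (by omega)))
  · rintro ⟨H, hζ⟩ ⟨l, hl⟩
    by_cases h : l < t
    · exact (congrArg₂ (S.h l)
          (S.olp_congr x0 w l (fun j => S.snocU t u a j.1 (j.2.trans h) (by omega)))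
          (S.snocU t u a l h hl)).trans
        ((H ⟨l, h⟩).trans (S.snocZ t z ζ l h hl).symm)
    · have hlt : l = t := by omega
      subst hlt
      exact (congrArg₂ (S.h l)
          (S.olp_congr x0 w l (fun j => S.snocU l u a j.1 j.2 (by omega)))
          (S.snocUlast l u a hl)).trans
        (hζ.trans (S.snocZlast l z ζ hl).symm)

/-! ### trajectory lemmas -/

lemma traj_succ_def (g : S.Strat) (x0 : S.X 0) (w : ∀ s, S.W s) (t : ℕ) :
    S.traj g x0 w (t+1) =
      (S.f t (S.traj g x0 w t).1
        (g t (S.traj g x0 w t).2.1 (S.traj g x0 w t).2.2) (w t),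
       Fin.snoc (α := fun ℓ : Fin (t+1) => S.Z (ℓ.1+1)) (S.traj g x0 w t).2.1
        (S.h t (S.traj g x0 w t).1 (g t (S.traj g x0 w t).2.1 (S.traj g x0 w t).2.2)),
       Fin.snoc (α := fun ℓ : Fin (t+1) => S.U ℓ.1) (S.traj g x0 w t).2.2
        (g t (S.traj g x0 w t).2.1 (S.traj g x0 w t).2.2)) := rfl

lemma traj_spec (g : S.Strat) (x0 : S.X 0) (w : ∀ s, S.W s) (t : ℕ) :
    (S.traj g x0 w t).1 = S.olp x0 w t (S.traj g x0 w t).2.2 ∧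
    S.gcons g t (S.traj g x0 w t).2.1 (S.traj g x0 w t).2.2 ∧
    S.ocons x0 w t (S.traj g x0 w t).2.1 (S.traj g x0 w t).2.2 := by
  induction t with
  | zero => exact ⟨rfl, fun ℓ => ℓ.elim0, fun ℓ => ℓ.elim0⟩
  | succ t ih =>
    obtain ⟨h1, h2, h3⟩ := ih
    rw [S.traj_succ_def g x0 w t]
    refine ⟨?_, (S.gcons_snoc g t _ _ _ _).mpr ⟨h2, rfl⟩,
      (S.ocons_snoc x0 w t _ _ _ _).mpr ⟨h3, ?_⟩⟩
    · rw [S.olp_snoc, ← h1]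
    · rw [← h1]

lemma traj_of_cons (g : S.Strat) (x0 : S.X 0) (w : ∀ s, S.W s) :
    ∀ (t : ℕ) (z : ∀ ℓ : Fin t, S.Z (ℓ.1+1)) (u : ∀ ℓ : Fin t, S.U ℓ.1),
      S.gcons g t z u → S.ocons x0 w t z u →
      S.traj g x0 w t = (S.olp x0 w t u, z, u) := by
  intro t
  induction t with
  | zero =>
    intro z u _ _
    have hz : z = (fun i : Fin 0 => i.elim0) := Subsingleton.elim _ _
    have hu : u = (fun i : Fin 0 => i.elim0) := Subsingleton.elim _ _
    subst hz; subst hu; rfl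
  | succ t ih =>
    intro z u hg ho
    have hz : Fin.snoc (α := fun ℓ : Fin (t+1) => S.Z (ℓ.1+1))
        (fun ℓ : Fin t => z ℓ.castSucc) (z (Fin.last t)) = z := Fin.snoc_init_self z
    have hu : Fin.snoc (α := fun ℓ : Fin (t+1) => S.U ℓ.1)
        (fun ℓ : Fin t => u ℓ.castSucc) (u (Fin.last t)) = u := Fin.snoc_init_self u
    rw [← hz, ← hu] at hg ho ⊢
    obtain ⟨hg', ha⟩ := (S.gcons_snoc g t _ _ _ _).mp hg
    obtain ⟨ho', hζ⟩ := (S.ocons_snoc x0 w t _ _ _ _).mp ho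
    have IH := ih _ _ hg' ho'
    rw [S.traj_succ_def g x0 w t, IH, S.olp_snoc, ← ha, ← hζ]

/-! ### infoState lemmas -/

lemma infoState_zero [∀ s, Nonempty (S.W s)] (z : ∀ ℓ : Fin 0, S.Z (ℓ.1+1))
    (u : ∀ ℓ : Fin 0, S.U ℓ.1) : S.infoState 0 z u = S.X0 := by
  ext x
  constructor
  · rintro ⟨x0, hx0, w, -, rfl⟩
    exact hx0
  · intro hx
    exact ⟨x, hx, Classical.arbitrary _, fun ℓ => ℓ.elim0, rfl⟩

lemma infoState_succ (t : ℕ) (z : ∀ ℓ : Fin t, S.Z (ℓ.1+1)) (u : ∀ ℓ : Fin t, S.U ℓ.1)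
    (a : S.U t) (ζ : S.Z (t+1)) :
    S.infoState (t+1) (Fin.snoc (α := fun ℓ : Fin (t+1) => S.Z (ℓ.1+1)) z ζ)
      (Fin.snoc (α := fun ℓ : Fin (t+1) => S.U ℓ.1) u a)
      = S.Ftil t (S.infoState t z u) a ζ := by
  ext x'
  constructor
  · rintro ⟨x0, hx0, w, hoc, rfl⟩
    obtain ⟨ho, hζ⟩ := (S.ocons_snoc x0 w t z u a ζ).mp hoc
    exact ⟨S.olp x0 w t u, ⟨x0, hx0, w, ho, rfl⟩, hζ, w t, S.olp_snoc x0 w t u a⟩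
  · rintro ⟨x, ⟨x0, hx0, w, hoc, rfl⟩, hζ, wt, rfl⟩
    refine ⟨x0, hx0, Function.update w t wt, ?_, ?_⟩
    · refine (S.ocons_snoc x0 _ t z u a ζ).mpr ⟨?_, ?_⟩
      · intro ℓ
        have e : S.olp x0 (Function.update w t wt) ℓ.1 (fun j => u ⟨j.1, j.2.trans ℓ.2⟩)
            = S.olp x0 w ℓ.1 (fun j => u ⟨j.1, j.2.trans ℓ.2⟩) :=
          S.olp_congr_w x0 (fun s hs => Function.update_of_ne (by omega) _ _) _
        rw [e]
        exact hoc ℓ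
      · have e : S.olp x0 (Function.update w t wt) t u = S.olp x0 w t u :=
          S.olp_congr_w x0 (fun s hs => Function.update_of_ne (by omega) _ _) _
        rw [e]
        exact hζ
    · rw [S.olp_snoc]
      have e : S.olp x0 (Function.update w t wt) t u = S.olp x0 w t u :=
        S.olp_congr_w x0 (fun s hs => Function.update_of_ne (by omega) _ _) _
      rw [e, Function.update_self]

/-! ### value-function lemmas -/

noncomputable def Fval (t : ℕ) (P : Set (S.X t)) (u : S.U t) : ℝ :=
  sSup {s | ∃ z ∈ S.Zfeas t P u, s = S.V (t+1) (S.Ftil t P u z)}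

lemma V_T_eq (P : Set (S.X S.T)) : S.V S.T P = sSup {r | ∃ x ∈ P, r = S.d x} := by
  rw [Sys.V]
  simp

lemma V_eq_sInf (t : ℕ) (ht : t < S.T) (P : Set (S.X t)) :
    S.V t P = sInf {r | ∃ u : S.U t, r = S.Fval t P u} := by
  rw [Sys.V, dif_neg (by omega), dif_pos ht]
  rfl

variable [∀ t, Finite (S.X t)] [∀ t, Finite (S.U t)] [∀ t, Nonempty (S.U t)]
  [∀ t, Finite (S.Z t)]

lemma le_V_T {P : Set (S.X S.T)} {x : S.X S.T} (hx : x ∈ P) : S.d x ≤ S.V S.T P := by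
  rw [V_T_eq]
  refine le_csSup (((Set.finite_range S.d).subset ?_).bddAbove) ⟨x, hx, rfl⟩
  rintro r ⟨y, -, rfl⟩; exact ⟨y, rfl⟩

lemma V_T_le {P : Set (S.X S.T)} (hP : P.Nonempty) {c : ℝ} (hc : ∀ x ∈ P, S.d x ≤ c) :
    S.V S.T P ≤ c := by
  rw [V_T_eq]
  refine csSup_le ⟨S.d hP.choose, hP.choose, hP.choose_spec, rfl⟩ ?_
  rintro r ⟨x, hx, rfl⟩; exact hc x hx

lemma V_le_Fval (t : ℕ) (ht : t < S.T) (P : Set (S.X t)) (u : S.U t) :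
    S.V t P ≤ S.Fval t P u := by
  rw [S.V_eq_sInf t ht]
  refine csInf_le (((Set.finite_range (S.Fval t P)).subset ?_).bddBelow) ⟨u, rfl⟩
  rintro r ⟨v, rfl⟩; exact ⟨v, rfl⟩

lemma exists_Fval_eq_V (t : ℕ) (ht : t < S.T) (P : Set (S.X t)) :
    ∃ u : S.U t, S.Fval t P u = S.V t P := by
  rw [S.V_eq_sInf t ht]
  have hfin : {r | ∃ u : S.U t, r = S.Fval t P u}.Finite := by
    refine (Set.finite_range (S.Fval t P)).subset ?_
    rintro r ⟨v, rfl⟩; exact ⟨v, rfl⟩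
  have hne : {r | ∃ u : S.U t, r = S.Fval t P u}.Nonempty :=
    ⟨S.Fval t P (Classical.arbitrary _), Classical.arbitrary _, rfl⟩
  obtain ⟨u, hu⟩ := hne.csInf_mem hfin
  exact ⟨u, hu.symm⟩

lemma Fval_finite (t : ℕ) (P : Set (S.X t)) (u : S.U t) :
    {s | ∃ z ∈ S.Zfeas t P u, s = S.V (t+1) (S.Ftil t P u z)}.Finite := by
  refine (Set.finite_range (fun z => S.V (t+1) (S.Ftil t P u z))).subset ?_
  rintro r ⟨z, -, rfl⟩; exact ⟨z, rfl⟩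

lemma le_Fval (t : ℕ) (P : Set (S.X t)) (u : S.U t) {z : S.Z (t+1)}
    (hz : z ∈ S.Zfeas t P u) : S.V (t+1) (S.Ftil t P u z) ≤ S.Fval t P u :=
  le_csSup (S.Fval_finite t P u).bddAbove ⟨z, hz, rfl⟩

lemma exists_z_Fval (t : ℕ) (P : Set (S.X t)) (u : S.U t) (hP : P.Nonempty) :
    ∃ z ∈ S.Zfeas t P u, S.Fval t P u = S.V (t+1) (S.Ftil t P u z) := by
  obtain ⟨x, hx⟩ := hP
  have hne : {s | ∃ z ∈ S.Zfeas t P u, s = S.V (t+1) (S.Ftil t P u z)}.Nonempty :=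
    ⟨_, S.h t x u, ⟨x, hx, rfl⟩, rfl⟩
  exact hne.csSup_mem (S.Fval_finite t P u)

/-! ### the DP-optimal strategy -/

noncomputable def optAct (t : ℕ) (P : Set (S.X t)) : S.U t :=
  if ht : t < S.T then (S.exists_Fval_eq_V t ht P).choose else Classical.arbitrary _

lemma optAct_spec (t : ℕ) (ht : t < S.T) (P : Set (S.X t)) :
    S.Fval t P (S.optAct t P) = S.V t P := by
  rw [optAct, dif_pos ht]
  exact (S.exists_Fval_eq_V t ht P).choose_spec

noncomputable def gstar : S.Strat := fun t z u => S.optAct t (S.infoState t z u)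

lemma gstar_step (x0 : S.X 0) (hx0 : x0 ∈ S.X0) (w : ∀ s, S.W s) (t : ℕ) (ht : t < S.T) :
    S.V (t+1) (S.infoState (t+1) (S.traj S.gstar x0 w (t+1)).2.1
        (S.traj S.gstar x0 w (t+1)).2.2)
      ≤ S.V t (S.infoState t (S.traj S.gstar x0 w t).2.1 (S.traj S.gstar x0 w t).2.2) := by
  obtain ⟨h1, h2, h3⟩ := S.traj_spec S.gstar x0 w t
  have hxP : (S.traj S.gstar x0 w t).1
      ∈ S.infoState t (S.traj S.gstar x0 w t).2.1 (S.traj S.gstar x0 w t).2.2 :=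
    ⟨x0, hx0, w, h3, h1.symm⟩
  rw [S.traj_succ_def S.gstar x0 w t]
  rw [S.infoState_succ t (S.traj S.gstar x0 w t).2.1 (S.traj S.gstar x0 w t).2.2
    (S.gstar t (S.traj S.gstar x0 w t).2.1 (S.traj S.gstar x0 w t).2.2)
    (S.h t (S.traj S.gstar x0 w t).1
      (S.gstar t (S.traj S.gstar x0 w t).2.1 (S.traj S.gstar x0 w t).2.2))]
  have hle := S.le_Fval t
    (S.infoState t (S.traj S.gstar x0 w t).2.1 (S.traj S.gstar x0 w t).2.2)
    (S.gstar t (S.traj S.gstar x0 w t).2.1 (S.traj S.gstar x0 w t).2.2)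
    (z := S.h t (S.traj S.gstar x0 w t).1
      (S.gstar t (S.traj S.gstar x0 w t).2.1 (S.traj S.gstar x0 w t).2.2))
    ⟨(S.traj S.gstar x0 w t).1, hxP, rfl⟩
  refine hle.trans ?_
  exact le_of_eq (S.optAct_spec t ht _)

lemma gstar_bound [∀ s, Nonempty (S.W s)] (x0 : S.X 0) (hx0 : x0 ∈ S.X0) (w : ∀ s, S.W s) :
    S.d (S.traj S.gstar x0 w S.T).1 ≤ S.V 0 S.X0 := by
  have key : ∀ j, j ≤ S.T → S.d (S.traj S.gstar x0 w S.T).1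
      ≤ S.V (S.T - j) (S.infoState (S.T - j) (S.traj S.gstar x0 w (S.T - j)).2.1
          (S.traj S.gstar x0 w (S.T - j)).2.2) := by
    intro j
    induction j with
    | zero =>
      intro _
      simp only [Nat.sub_zero]
      obtain ⟨h1, h2, h3⟩ := S.traj_spec S.gstar x0 w S.T
      exact S.le_V_T ⟨x0, hx0, w, h3, h1.symm⟩
    | succ j ih =>
      intro hj
      have h1 : S.T - j = (S.T - (j+1)) + 1 := by omega
      have hstep := S.gstar_step x0 hx0 w (S.T - (j+1)) (by omega)
      have h2 := ih (by omega)
      rw [h1] at h2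
      exact h2.trans hstep
  have h := key S.T le_rfl
  rw [Nat.sub_self] at h
  rwa [S.infoState_zero] at h

lemma J_gstar_le [∀ s, Nonempty (S.W s)] (hX0 : S.X0.Nonempty) :
    S.J S.gstar ≤ S.V 0 S.X0 := by
  refine csSup_le ⟨S.d (S.traj S.gstar hX0.choose (Classical.arbitrary _) S.T).1,
    hX0.choose, hX0.choose_spec, Classical.arbitrary _, rfl⟩ ?_
  rintro r ⟨x0, hx0, w, rfl⟩
  exact S.gstar_bound x0 hx0 w

/-! ### the lower bound -/

def Hset (g : S.Strat) (t : ℕ) (z : ∀ ℓ : Fin t, S.Z (ℓ.1+1)) (u : ∀ ℓ : Fin t, S.U ℓ.1) :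
    Set ℝ :=
  {r | ∃ x0 ∈ S.X0, ∃ w : ∀ s, S.W s, (S.traj g x0 w t).2.1 = z ∧
    (S.traj g x0 w t).2.2 = u ∧ r = S.d (S.traj g x0 w S.T).1}

lemma Hset_subset_range (g : S.Strat) (t : ℕ) (z : ∀ ℓ : Fin t, S.Z (ℓ.1+1))
    (u : ∀ ℓ : Fin t, S.U ℓ.1) : S.Hset g t z u ⊆ Set.range S.d := by
  rintro r ⟨x0, hx0, w, -, -, rfl⟩
  exact ⟨_, rfl⟩

lemma lb_base (g : S.Strat) (z : ∀ ℓ : Fin S.T, S.Z (ℓ.1+1)) (u : ∀ ℓ : Fin S.T, S.U ℓ.1)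
    (hne : (S.Hset g S.T z u).Nonempty) :
    S.V S.T (S.infoState S.T z u) ≤ sSup (S.Hset g S.T z u) := by
  obtain ⟨r0, x0, hx0, w, hz, hu, hr⟩ := hne
  obtain ⟨h1, h2, h3⟩ := S.traj_spec g x0 w S.T
  rw [hz, hu] at h2 h3
  refine S.V_T_le (P := S.infoState S.T z u) ⟨S.olp x0 w S.T u, x0, hx0, w, h3, rfl⟩ ?_
  rintro x ⟨x0', hx0', w', ho', rfl⟩
  have htr := S.traj_of_cons g x0' w' S.T z u h2 ho'
  refine le_csSup (((Set.finite_range S.d).subset (S.Hset_subset_range g S.T z u)).bddAbove) ?_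
  exact ⟨x0', hx0', w', by rw [htr], by rw [htr], by rw [htr]⟩

lemma lb_step (g : S.Strat) (t : ℕ) (ht : t < S.T) (z : ∀ ℓ : Fin t, S.Z (ℓ.1+1))
    (u : ∀ ℓ : Fin t, S.U ℓ.1) (hne : (S.Hset g t z u).Nonempty)
    (ih : ∀ (z' : ∀ ℓ : Fin (t+1), S.Z (ℓ.1+1)) (u' : ∀ ℓ : Fin (t+1), S.U ℓ.1),
      (S.Hset g (t+1) z' u').Nonempty →
      S.V (t+1) (S.infoState (t+1) z' u') ≤ sSup (S.Hset g (t+1) z' u')) :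
    S.V t (S.infoState t z u) ≤ sSup (S.Hset g t z u) := by
  obtain ⟨r0, x0, hx0, w, hz, hu, hr⟩ := hne
  obtain ⟨h1, h2, h3⟩ := S.traj_spec g x0 w t
  rw [hz, hu] at h2 h3
  have hPne : (S.infoState t z u).Nonempty := ⟨S.olp x0 w t u, x0, hx0, w, h3, rfl⟩
  obtain ⟨zs, hzs, hFz⟩ := S.exists_z_Fval t (S.infoState t z u) (g t z u) hPne
  obtain ⟨xs, hxsP, hzeq⟩ := hzs
  obtain ⟨x0s, hx0s, ws, hos, hxs⟩ := hxsP
  have htr := S.traj_of_cons g x0s ws t z u h2 hos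
  rw [hxs] at htr
  have hist1 : (S.traj g x0s ws (t+1)).2.1
      = Fin.snoc (α := fun ℓ : Fin (t+1) => S.Z (ℓ.1+1)) z zs := by
    rw [S.traj_succ_def g x0s ws t, htr]
    simp only
    rw [hzeq]
  have hist2 : (S.traj g x0s ws (t+1)).2.2
      = Fin.snoc (α := fun ℓ : Fin (t+1) => S.U ℓ.1) u (g t z u) := by
    rw [S.traj_succ_def g x0s ws t, htr]
  have hne' : (S.Hset g (t+1) (Fin.snoc (α := fun ℓ : Fin (t+1) => S.Z (ℓ.1+1)) z zs)
      (Fin.snoc (α := fun ℓ : Fin (t+1) => S.U ℓ.1) u (g t z u))).Nonempty :=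
    ⟨S.d (S.traj g x0s ws S.T).1, x0s, hx0s, ws, hist1, hist2, rfl⟩
  have hsub : S.Hset g (t+1) (Fin.snoc (α := fun ℓ : Fin (t+1) => S.Z (ℓ.1+1)) z zs)
      (Fin.snoc (α := fun ℓ : Fin (t+1) => S.U ℓ.1) u (g t z u)) ⊆ S.Hset g t z u := by
    rintro r ⟨x0', hx0', w', hz', hu', rfl⟩
    have hz2 : (S.traj g x0' w' t).2.1 = z := by
      calc (S.traj g x0' w' t).2.1
          = Fin.init (α := fun ℓ : Fin (t+1) => S.Z (ℓ.1+1)) ((S.traj g x0' w' (t+1)).2.1) :=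
            (Fin.init_snoc (α := fun ℓ : Fin (t+1) => S.Z (ℓ.1+1))
              (p := (S.traj g x0' w' t).2.1)
              (x := S.h t (S.traj g x0' w' t).1
                (g t (S.traj g x0' w' t).2.1 (S.traj g x0' w' t).2.2))).symm
        _ = Fin.init (α := fun ℓ : Fin (t+1) => S.Z (ℓ.1+1))
              (Fin.snoc (α := fun ℓ : Fin (t+1) => S.Z (ℓ.1+1)) z zs) := by rw [hz']
        _ = z := Fin.init_snoc _ _
    have hu2 : (S.traj g x0' w' t).2.2 = u := by
      calc (S.traj g x0' w' t).2.2
          = Fin.init (α := fun ℓ : Fin (t+1) => S.U ℓ.1) ((S.traj g x0' w' (t+1)).2.2) :=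
            (Fin.init_snoc (α := fun ℓ : Fin (t+1) => S.U ℓ.1)
              (p := (S.traj g x0' w' t).2.2)
              (x := g t (S.traj g x0' w' t).2.1 (S.traj g x0' w' t).2.2)).symm
        _ = Fin.init (α := fun ℓ : Fin (t+1) => S.U ℓ.1)
              (Fin.snoc (α := fun ℓ : Fin (t+1) => S.U ℓ.1) u (g t z u)) := by rw [hu']
        _ = u := Fin.init_snoc _ _
    exact ⟨x0', hx0', w', hz2, hu2, rfl⟩
  calc S.V t (S.infoState t z u) ≤ S.Fval t (S.infoState t z u) (g t z u) :=
        S.V_le_Fval t ht _ _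
    _ = S.V (t+1) (S.Ftil t (S.infoState t z u) (g t z u) zs) := hFz
    _ = S.V (t+1) (S.infoState (t+1)
          (Fin.snoc (α := fun ℓ : Fin (t+1) => S.Z (ℓ.1+1)) z zs)
          (Fin.snoc (α := fun ℓ : Fin (t+1) => S.U ℓ.1) u (g t z u))) := by
        rw [S.infoState_succ]
    _ ≤ sSup (S.Hset g (t+1) _ _) := ih _ _ hne'
    _ ≤ sSup (S.Hset g t z u) :=
        csSup_le_csSup (((Set.finite_range S.d).subset
          (S.Hset_subset_range g t z u)).bddAbove) hne' hsub

lemma lb_main (g : S.Strat) :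
    ∀ (k t : ℕ), S.T - t ≤ k → t ≤ S.T → ∀ (z : ∀ ℓ : Fin t, S.Z (ℓ.1+1))
      (u : ∀ ℓ : Fin t, S.U ℓ.1), (S.Hset g t z u).Nonempty →
      S.V t (S.infoState t z u) ≤ sSup (S.Hset g t z u) := by
  intro k
  induction k with
  | zero =>
    intro t hk hle z u hne
    have : t = S.T := by omega
    subst this
    exact S.lb_base g z u hne
  | succ k ih =>
    intro t hk hle z u hne
    by_cases hlt : t < S.T
    · exact S.lb_step g t hlt z u hne (fun z' u' hne' =>
        ih (t+1) (by omega) (by omega) z' u' hne')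
    · have : t = S.T := by omega
      subst this
      exact S.lb_base g z u hne

lemma V0_le_J [∀ s, Nonempty (S.W s)] (hX0 : S.X0.Nonempty) (g : S.Strat) :
    S.V 0 S.X0 ≤ S.J g := by
  have hne : (S.Hset g 0 (fun i => i.elim0) (fun i => i.elim0)).Nonempty :=
    ⟨S.d (S.traj g hX0.choose (Classical.arbitrary _) S.T).1,
      hX0.choose, hX0.choose_spec, Classical.arbitrary _,
      Subsingleton.elim _ _, Subsingleton.elim _ _, rfl⟩
  have h := S.lb_main g S.T 0 (by omega) (by omega) (fun i => i.elim0) (fun i => i.elim0) hne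
  rw [S.infoState_zero] at h
  have hJ : sSup (S.Hset g 0 (fun i => i.elim0) (fun i => i.elim0)) = S.J g := by
    unfold J Hset
    congr 1
    ext r
    constructor
    · rintro ⟨x0, hx0, w, -, -, rfl⟩
      exact ⟨x0, hx0, w, rfl⟩
    · rintro ⟨x0, hx0, w, rfl⟩
      exact ⟨x0, hx0, w, Subsingleton.elim _ _, Subsingleton.elim _ _, rfl⟩
  rwa [hJ] at h

end Aux

end Sys


/-- the optimal worst-case cost equals the dynamic-programming
value at the initial information state. -/
theorem stmt13 (S : Sys) (hT : 1 ≤ S.T)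
    [∀ t, Finite (S.X t)] [∀ t, Nonempty (S.X t)]
    [∀ t, Finite (S.U t)] [∀ t, Nonempty (S.U t)]
    [∀ t, Finite (S.W t)] [∀ t, Nonempty (S.W t)]
    [∀ t, Finite (S.Z t)] [∀ t, Nonempty (S.Z t)]
    (hX0 : S.X0.Nonempty) :
    sInf {r | ∃ g : S.Strat, r = S.J g} = S.V 0 S.X0 := by
  apply le_antisymm
  · have h1 : sInf {r | ∃ g : S.Strat, r = S.J g} ≤ S.J S.gstar := by
      refine csInf_le ⟨S.V 0 S.X0, ?_⟩ ⟨S.gstar, rfl⟩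
      rintro r ⟨g, rfl⟩
      exact S.V0_le_J hX0 g
    exact h1.trans (S.J_gstar_le hX0)
  · refine le_csInf ⟨S.J S.gstar, S.gstar, rfl⟩ ?_
    rintro r ⟨g, rfl⟩
    exact S.V0_le_J hX0 g
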